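/- arXiv:1512.08370 — 2 statements merged into one kernel-verified Lean document; each statement's English description precedes it below -/
import Mathlib

section
/- Consider Algorithm 1 applied to the convex program min{f(x) : g_k(x) ≤ 0 ∀k ∈ {1,…,m}, x ∈ 𝒳} with parameter α > β²/2, where β is the Lipschitz modulus of g on 𝒳, and let x* ∈ 𝒳 be an optimal solution of the program. Then for all t ≥ 1, ∑_{τ=0}^{t−1} f(x(τ)) ≤ t·f(x*) + α‖x* − x(−1)‖² + (α/(2α − β²))‖g(x*)‖² − (1/2)‖Q(t)‖². -/
/-!
Drift-plus-penalty argument. The potential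
`Φ t = ‖Q t‖² / 2 + α ‖x* - x(t-1)‖² - ‖g (x(t-1))‖² / 2` satisfies
`f (x t) + Φ (t+1) ≤ f x* + Φ t`: the queue update gives
`‖Q(t+1)‖² / 2 ≤ ‖Q t‖² / 2 + ⟪Q t, g (x t)⟫ + ‖g (x t)‖²`, the three-point inequality of the
proximal step (whose objective is convex because `Q t + g (x(t-1)) ≥ 0`) compares `x t` with `x*`,
feasibility of `x*` gives `⟪Q t + g (x(t-1)), g x*⟫ ≤ 0`, and the linearization error
`‖g (x t) - g (x(t-1))‖² / 2` is absorbed by `α ‖x t - x(t-1)‖²` because `β² ≤ 2α`.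
Telescoping, `Φ 0 ≤ α ‖x* - x(-1)‖²` since `|Q_k 0| ≤ |g_k (x(-1))|`, and completing the square in
`‖g (x(t-1))‖ ≤ ‖g x*‖ + β ‖x* - x(t-1)‖` bounds `Φ t` below by
`‖Q t‖² / 2 - α / (2α - β²) ‖g x*‖²`.
-/

open scoped RealInnerProductSpace
open Filter Topology

lemma EuclideanSpace.real_inner_eq_sum {ι : Type*} [Fintype ι] (v w : EuclideanSpace ℝ ι) :
    ⟪v, w⟫ = ∑ k, v k * w k := by
  simp [PiLp.inner_apply, mul_comm]

lemma le_of_forall_sub_mul_le {a b c : ℝ} (h : ∀ θ ∈ Set.Ioc (0 : ℝ) 1, a - θ * c ≤ b) :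
    a ≤ b := by
  have hlim : Tendsto (fun θ : ℝ => a - θ * c) (𝓝[>] 0) (𝓝 a) := by
    have : Tendsto (fun θ : ℝ => a - θ * c) (𝓝 0) (𝓝 (a - 0 * c)) :=
      (continuous_const.sub (continuous_id.mul continuous_const)).tendsto 0
    simpa using this.mono_left nhdsWithin_le_nhds
  refine le_of_tendsto hlim ?_
  filter_upwards [Ioc_mem_nhdsGT one_pos] with θ hθ using h θ hθ

section InnerProductSpace

variable {E : Type*} [NormedAddCommGroup E] [InnerProductSpace ℝ E]

lemma norm_one_sub_smul_add_smul_sq (u v : E) (θ : ℝ) :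
    ‖(1 - θ) • u + θ • v‖ ^ 2 =
      (1 - θ) * ‖u‖ ^ 2 + θ * ‖v‖ ^ 2 - θ * (1 - θ) * ‖u - v‖ ^ 2 := by
  rw [norm_add_sq_real, norm_sub_sq_real, norm_smul, norm_smul, real_inner_smul_left,
    real_inner_smul_right]
  simp only [Real.norm_eq_abs, mul_pow, sq_abs]
  ring

lemma ConvexOn.three_point_of_isMinOn {X : Set E} {h : E → ℝ} (hh : ConvexOn ℝ X h) {α : ℝ}
    {a p z : E} (hp : p ∈ X) (hz : z ∈ X)
    (hmin : IsMinOn (fun w => h w + α * ‖w - a‖ ^ 2) X p) :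
    h p + α * ‖p - a‖ ^ 2 + α * ‖z - p‖ ^ 2 ≤ h z + α * ‖z - a‖ ^ 2 := by
  refine le_of_forall_sub_mul_le (c := α * ‖z - p‖ ^ 2) fun θ ⟨hθ0, hθ1⟩ => ?_
  have hmid := isMinOn_iff.1 hmin _ (hh.1 hp hz (sub_nonneg.2 hθ1) hθ0.le (sub_add_cancel 1 θ))
  have hconv := hh.2 hp hz (sub_nonneg.2 hθ1) hθ0.le (sub_add_cancel 1 θ)
  have hsplit : (1 - θ) • p + θ • z - a = (1 - θ) • (p - a) + θ • (z - a) := by module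
  simp only [smul_eq_mul] at hconv
  simp only [hsplit, norm_one_sub_smul_add_smul_sq, sub_sub_sub_cancel_right,
    norm_sub_rev p z] at hmid
  have : θ * (h p + α * ‖p - a‖ ^ 2 + α * ‖z - p‖ ^ 2 - θ * (α * ‖z - p‖ ^ 2)) ≤
      θ * (h z + α * ‖z - a‖ ^ 2) := by nlinarith
  exact le_of_mul_le_mul_left this hθ0

variable {ι : Type*} [Fintype ι]

lemma convexOn_inner_of_nonneg {X : Set E} (hX : Convex ℝ X) {g : E → EuclideanSpace ℝ ι}
    (hg : ∀ k, ConvexOn ℝ X fun z => g z k) {c : EuclideanSpace ℝ ι} (hc : ∀ k, 0 ≤ c k) :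
    ConvexOn ℝ X fun z => ⟪c, g z⟫ := by
  refine ⟨hX, fun u hu v hv a b ha hb hab => ?_⟩
  simp only [EuclideanSpace.real_inner_eq_sum, smul_eq_mul, Finset.mul_sum,
    ← Finset.sum_add_distrib]
  refine Finset.sum_le_sum fun k _ => ?_
  have hk := (hg k).2 hu hv ha hb hab
  simp only [smul_eq_mul] at hk
  calc c k * g (a • u + b • v) k ≤ c k * (a * g u k + b * g v k) :=
        mul_le_mul_of_nonneg_left hk (hc k)
    _ = a * (c k * g u k) + b * (c k * g v k) := by ring

end InnerProductSpace

lemma sq_max_neg_add_le (q v : ℝ) : max (-v) (q + v) ^ 2 / 2 ≤ q ^ 2 / 2 + q * v + v ^ 2 := by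
  rcases le_total (-v) (q + v) with h | h
  · rw [max_eq_right h]; nlinarith [sq_nonneg v]
  · rw [max_eq_left h]; nlinarith [sq_nonneg (q + v)]

lemma half_sq_sub_mul_sq_le_of_le_add_mul {G G₀ d α β : ℝ} (hβα : β ^ 2 < 2 * α) (hG : 0 ≤ G)
    (hle : G ≤ G₀ + β * d) :
    G ^ 2 / 2 - α * d ^ 2 ≤ α / (2 * α - β ^ 2) * G₀ ^ 2 := by
  have hgap : 0 < 2 * α - β ^ 2 := by linarith
  have hsq : G ^ 2 ≤ (G₀ + β * d) ^ 2 := pow_le_pow_left₀ hG hle 2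
  rw [div_mul_eq_mul_div, le_div_iff₀ hgap]
  nlinarith [sq_nonneg (β * G₀ - (2 * α - β ^ 2) * d), mul_le_mul_of_nonneg_left hsq hgap.le]

lemma sum_range_add_le_of_forall_add_le {c Φ : ℕ → ℝ} {b : ℝ}
    (h : ∀ t, c t + Φ (t + 1) ≤ b + Φ t) (t : ℕ) :
    ∑ τ ∈ Finset.range t, c τ + Φ t ≤ t * b + Φ 0 := by
  induction t with
  | zero => simp
  | succ t ih => rw [Finset.sum_range_succ]; push_cast; linarith [h t]

namespace EuclideanSpace

variable {ι : Type*} [Fintype ι]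

lemma norm_sq_le_of_forall_sq_le {u v : EuclideanSpace ℝ ι} (h : ∀ k, u k ^ 2 ≤ v k ^ 2) :
    ‖u‖ ^ 2 ≤ ‖v‖ ^ 2 := by
  simpa only [real_norm_sq_eq] using Finset.sum_le_sum fun k _ => h k

lemma norm_sq_le_of_eq_max_neg_add {Q Q' v : EuclideanSpace ℝ ι}
    (hQ' : ∀ k, Q' k = max (-v k) (Q k + v k)) :
    ‖Q'‖ ^ 2 / 2 ≤ ‖Q‖ ^ 2 / 2 + ⟪Q, v⟫ + ‖v‖ ^ 2 := by
  simp only [real_norm_sq_eq, real_inner_eq_sum, Finset.sum_div, ← Finset.sum_add_distrib, hQ']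
  exact Finset.sum_le_sum fun k _ => sq_max_neg_add_le (Q k) (v k)

end EuclideanSpace

section DriftPlusPenalty

variable {E ι : Type*} [NormedAddCommGroup E] [InnerProductSpace ℝ E] [Fintype ι]

lemma potential_step_le {X : Set E} (hX : Convex ℝ X) {f : E → ℝ} (hf : ConvexOn ℝ X f)
    {g : E → EuclideanSpace ℝ ι} (hg : ∀ k, ConvexOn ℝ X fun z => g z k) {α β : ℝ}
    (hβα : β ^ 2 ≤ 2 * α) {Q Q' : EuclideanSpace ℝ ι} {a p xs : E} (hp : p ∈ X) (hxs : xs ∈ X)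
    (hfeas : ∀ k, g xs k ≤ 0) (hLip : ‖g p - g a‖ ≤ β * ‖p - a‖)
    (hweight : ∀ k, 0 ≤ (Q + g a) k)
    (hmin : IsMinOn (fun z => f z + ⟪Q + g a, g z⟫ + α * ‖z - a‖ ^ 2) X p)
    (hQ' : ∀ k, Q' k = max (-g p k) (Q k + g p k)) :
    f p + (‖Q'‖ ^ 2 / 2 + α * ‖xs - p‖ ^ 2 - ‖g p‖ ^ 2 / 2) ≤
      f xs + (‖Q‖ ^ 2 / 2 + α * ‖xs - a‖ ^ 2 - ‖g a‖ ^ 2 / 2) := by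
  have hdrift := EuclideanSpace.norm_sq_le_of_eq_max_neg_add hQ'
  have hconv := hf.add (convexOn_inner_of_nonneg hX hg hweight)
  have hthree := hconv.three_point_of_isMinOn hp hxs hmin
  have hslack : ⟪Q + g a, g xs⟫ ≤ 0 := by
    rw [EuclideanSpace.real_inner_eq_sum]
    exact Finset.sum_nonpos fun k _ => mul_nonpos_of_nonneg_of_nonpos (hweight k) (hfeas k)
  have hLip_sq : ‖g p - g a‖ ^ 2 ≤ 2 * α * ‖p - a‖ ^ 2 := calc
    ‖g p - g a‖ ^ 2 ≤ (β * ‖p - a‖) ^ 2 := pow_le_pow_left₀ (norm_nonneg _) hLip 2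
    _ = β ^ 2 * ‖p - a‖ ^ 2 := mul_pow _ _ _
    _ ≤ 2 * α * ‖p - a‖ ^ 2 := mul_le_mul_of_nonneg_right hβα (sq_nonneg _)
  -- polarization: `⟪Q, v⟫ + ‖v‖² = ⟪Q + w, v⟫ + ‖v‖²/2 - ‖w‖²/2 + ‖v - w‖²/2`
  have hpolar := norm_sub_sq_real (g p) (g a)
  rw [real_inner_comm] at hpolar
  simp only [Pi.add_apply, inner_add_left] at hthree hslack
  linarith

end DriftPlusPenalty

theorem alg1_objective_sum_bound_strict_general
    {n m : ℕ}
    (X : Set (EuclideanSpace ℝ (Fin n))) (hXconv : Convex ℝ X)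
    (f : EuclideanSpace ℝ (Fin n) → ℝ) (hf : ConvexOn ℝ X f)
    (g : EuclideanSpace ℝ (Fin n) → EuclideanSpace ℝ (Fin m))
    (hg : ∀ k : Fin m, ConvexOn ℝ X (fun z => g z k))
    (β : ℝ) (hLip : ∀ u ∈ X, ∀ v ∈ X, ‖g u - g v‖ ≤ β * ‖u - v‖)
    (α : ℝ) (hα : β ^ 2 / 2 < α)
    (x : ℤ → EuclideanSpace ℝ (Fin n)) (hxm1 : x (-1) ∈ X)
    (Q : ℕ → EuclideanSpace ℝ (Fin m))
    (hQ0 : ∀ k : Fin m, Q 0 k = max 0 (-(g (x (-1)) k)))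
    (hxmem : ∀ t : ℕ, x t ∈ X)
    (hmin : ∀ t : ℕ, ∀ z ∈ X,
      f (x t) + ⟪Q t + g (x ((t : ℤ) - 1)), g (x t)⟫ + α * ‖x t - x ((t : ℤ) - 1)‖ ^ 2 ≤
        f z + ⟪Q t + g (x ((t : ℤ) - 1)), g z⟫ + α * ‖z - x ((t : ℤ) - 1)‖ ^ 2)
    (hQrec : ∀ (t : ℕ) (k : Fin m),
      Q (t + 1) k = max (-(g (x t) k)) (Q t k + g (x t) k))
    (xs : EuclideanSpace ℝ (Fin n)) (hxs : xs ∈ X)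
    (hfeas : ∀ k : Fin m, g xs k ≤ 0)
    :
    ∀ t : ℕ, 1 ≤ t → ∑ τ ∈ Finset.range t, f (x τ) ≤ (t : ℝ) * f xs + α * ‖xs - x (-1)‖ ^ 2 + (α / (2 * α - β ^ 2)) * ‖g xs‖ ^ 2 - (1 / 2) * ‖Q t‖ ^ 2 := by
  set y : ℕ → EuclideanSpace ℝ (Fin n) := fun t => x ((t : ℤ) - 1) with hy
  have hy_zero : y 0 = x (-1) := by simp [hy]
  have hy_succ (t : ℕ) : y (t + 1) = x t := by simp [hy]
  have hy_mem : ∀ t, y t ∈ X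
    | 0 => hy_zero ▸ hxm1
    | t + 1 => hy_succ t ▸ hxmem t
  have hweight : ∀ t k, 0 ≤ (Q t + g (y t)) k
    | 0, k => by
      simp only [PiLp.add_apply, hQ0, hy_zero]
      linarith [le_max_right 0 (-g (x (-1)) k)]
    | t + 1, k => by
      simp only [PiLp.add_apply, hQrec, hy_succ]
      linarith [le_max_left (-g (x t) k) (Q t k + g (x t) k)]
  set Φ : ℕ → ℝ := fun t => ‖Q t‖ ^ 2 / 2 + α * ‖xs - y t‖ ^ 2 - ‖g (y t)‖ ^ 2 / 2 with hΦ
  have hstep (t : ℕ) : f (x t) + Φ (t + 1) ≤ f xs + Φ t := by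
    simpa only [hΦ, hy_succ] using potential_step_le hXconv hf hg (by linarith) (hxmem t) hxs
      hfeas (hLip _ (hxmem t) _ (hy_mem t)) (hweight t) (isMinOn_iff.2 (hmin t)) (hQrec t)
  have hΦ_zero : Φ 0 ≤ α * ‖xs - x (-1)‖ ^ 2 := by
    have : ‖Q 0‖ ^ 2 ≤ ‖g (x (-1))‖ ^ 2 := EuclideanSpace.norm_sq_le_of_forall_sq_le fun k => by
      rw [hQ0]
      rcases le_total 0 (-g (x (-1)) k) with h | h
      · rw [max_eq_right h, neg_sq]
      · rw [max_eq_left h]; simpa using sq_nonneg (g (x (-1)) k)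
    simp only [hΦ, hy_zero]
    linarith
  have hΦ_ge (t : ℕ) : ‖Q t‖ ^ 2 / 2 - α / (2 * α - β ^ 2) * ‖g xs‖ ^ 2 ≤ Φ t := by
    have hle : ‖g (y t)‖ ≤ ‖g xs‖ + β * ‖y t - xs‖ :=
      (norm_le_insert' _ _).trans (add_le_add_right (hLip _ (hy_mem t) _ hxs) _)
    have := half_sq_sub_mul_sq_le_of_le_add_mul (α := α) (by linarith) (norm_nonneg _) hle
    simp only [hΦ, norm_sub_rev xs]
    linarith
  intro t _
  linarith [sum_range_add_le_of_forall_add_le hstep t, hΦ_ge t]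

theorem alg1_objective_sum_bound_strict
    {n m : ℕ}
    (X : Set (EuclideanSpace ℝ (Fin n))) (hXconv : Convex ℝ X) (hXcl : IsClosed X)
    (f : EuclideanSpace ℝ (Fin n) → ℝ) (hf : ConvexOn ℝ X f) (hfc : ContinuousOn f X)
    (g : EuclideanSpace ℝ (Fin n) → EuclideanSpace ℝ (Fin m))
    (hg : ∀ k : Fin m, ConvexOn ℝ X (fun z => g z k))
    (β : ℝ) (hLip : ∀ u ∈ X, ∀ v ∈ X, ‖g u - g v‖ ≤ β * ‖u - v‖)
    (α : ℝ) (hα : β ^ 2 / 2 < α)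
    (x : ℤ → EuclideanSpace ℝ (Fin n)) (hxm1 : x (-1) ∈ X)
    (Q : ℕ → EuclideanSpace ℝ (Fin m))
    (hQ0 : ∀ k : Fin m, Q 0 k = max 0 (-(g (x (-1)) k)))
    (hxmem : ∀ t : ℕ, x t ∈ X)
    (hmin : ∀ t : ℕ, ∀ z ∈ X,
      f (x t) + ⟪Q t + g (x ((t : ℤ) - 1)), g (x t)⟫ + α * ‖x t - x ((t : ℤ) - 1)‖ ^ 2 ≤
        f z + ⟪Q t + g (x ((t : ℤ) - 1)), g z⟫ + α * ‖z - x ((t : ℤ) - 1)‖ ^ 2)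
    (hQrec : ∀ (t : ℕ) (k : Fin m),
      Q (t + 1) k = max (-(g (x t) k)) (Q t k + g (x t) k))
    (xs : EuclideanSpace ℝ (Fin n)) (hxs : xs ∈ X)
    (hfeas : ∀ k : Fin m, g xs k ≤ 0)
    (hopt : ∀ z ∈ X, (∀ k : Fin m, g z k ≤ 0) → f xs ≤ f z)
    :
    ∀ t : ℕ, 1 ≤ t → ∑ τ ∈ Finset.range t, f (x τ) ≤ (t : ℝ) * f xs + α * ‖xs - x (-1)‖ ^ 2 + (α / (2 * α - β ^ 2)) * ‖g xs‖ ^ 2 - (1 / 2) * ‖Q t‖ ^ 2 :=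
  alg1_objective_sum_bound_strict_general X hXconv f hf g hg β hLip α hα x hxm1 Q hQ0 hxmem hmin
    hQrec xs hxs hfeas
end

section
/- Consider Algorithm 1 applied to the convex program min{f(x) : g_k(x) ≤ 0 ∀k ∈ {1,…,m}, x ∈ 𝒳} with parameter α > β²/2, where β is the Lipschitz modulus of g on 𝒳. Let x* ∈ 𝒳 be an optimal solution and suppose λ* ∈ ℝᵐ is a Lagrange multiplier vector attaining strong duality (λ*_k ≥ 0 for all k and f(x*) ≤ f(x) + ∑_k λ*_k g_k(x) for all x ∈ 𝒳). Then for all t ≥ 1, ‖Q(t)‖ ≤ 2‖λ*‖ + √(2α)·‖x* − x(−1)‖ + √(α/(α − β²/2))·‖g(x*)‖. -/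
open scoped RealInnerProductSpace

/-!
The quantity `‖Q t‖²/2 - ‖g (x (t-1))‖²/2 + α ‖x* - x (t-1)‖²` is a Lyapunov function. The
`x`-update minimises a `2α`-strongly convex function, so it satisfies a three-point inequality;
combined with the queue drift `‖Q (t+1)‖² ≤ ‖Q t + g (x t)‖² + ‖g (x t)‖²` and `β²/2 ≤ α`, the
Lyapunov function increases by at most `f x* - f (x t)` per step. Strong duality bounds the
accumulated `f x* - f (x τ)` by `⟪λ*, ∑ g (x τ)⟫ ≤ ‖λ*‖ ‖Q t‖`, since the queue dominates the
accumulated constraint values. The Lipschitz bound controls the remaining term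
`‖g (x (t-1))‖²/2 - α ‖x* - x (t-1)‖²`, and the resulting quadratic inequality in `‖Q t‖` gives
the bound.
-/

open Filter Topology Finset

section StrongConvexity

variable {E : Type*} [NormedAddCommGroup E] [InnerProductSpace ℝ E] {s : Set E}

theorem strongConvexOn_mul_norm_sub_sq (hs : Convex ℝ s) (α : ℝ) (p : E) :
    StrongConvexOn s (2 * α) fun z => α * ‖z - p‖ ^ 2 := by
  rw [strongConvexOn_iff_convex]
  have h : (fun z => α * ‖z - p‖ ^ 2 - 2 * α / 2 * ‖z‖ ^ 2) =
      fun z => α * ‖p‖ ^ 2 + innerₛₗ ℝ ((-2 * α) • p) z := by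
    funext z
    simp only [innerₛₗ_apply_apply, real_inner_smul_left, norm_sub_sq_real, real_inner_comm p z]
    ring
  rw [h]
  exact (convexOn_const _ hs).add ((innerₛₗ ℝ ((-2 * α) • p)).convexOn hs)

theorem StrongConvexOn.add_norm_sub_sq_le_of_isMinOn {m : ℝ} {φ : E → ℝ} {x₀ z : E}
    (hφ : StrongConvexOn s m φ) (hmin : IsMinOn φ s x₀) (hx₀ : x₀ ∈ s) (hz : z ∈ s) :
    φ x₀ + m / 2 * ‖z - x₀‖ ^ 2 ≤ φ z := by
  set C := m / 2 * ‖z - x₀‖ ^ 2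
  -- Compare `x₀` with `θ • z + (1 - θ) • x₀` and let `θ → 0⁺`.
  have hθ : ∀ θ ∈ Set.Ioo (0 : ℝ) 1, φ x₀ + (1 - θ) * C ≤ φ z := by
    rintro θ ⟨hθ₀, hθ₁⟩
    have hw : φ (θ • z + (1 - θ) • x₀) ≤ θ * φ z + (1 - θ) * φ x₀ - θ * (1 - θ) * C :=
      hφ.2 hz hx₀ hθ₀.le (sub_nonneg.2 hθ₁.le) (add_sub_cancel θ 1)
    have hle : φ x₀ ≤ φ (θ • z + (1 - θ) • x₀) :=
      hmin (hφ.1 hz hx₀ hθ₀.le (sub_nonneg.2 hθ₁.le) (add_sub_cancel θ 1))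
    have : θ * (φ x₀ + (1 - θ) * C) ≤ θ * φ z := by linarith
    exact le_of_mul_le_mul_left this hθ₀
  have hlim : Tendsto (fun θ : ℝ => φ x₀ + (1 - θ) * C) (𝓝[>] 0) (𝓝 (φ x₀ + C)) := by
    have : Continuous fun θ : ℝ => φ x₀ + (1 - θ) * C := by fun_prop
    simpa using (this.tendsto 0).mono_left nhdsWithin_le_nhds
  exact le_of_tendsto hlim (eventually_of_mem (Ioo_mem_nhdsGT one_pos) hθ)

end StrongConvexity

section EuclideanOrder

variable {ι : Type*} [Fintype ι]

theorem EuclideanSpace.inner_eq_sum_mul (c v : EuclideanSpace ℝ ι) :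
    ⟪c, v⟫ = ∑ k, c k * v k := by
  simp [PiLp.inner_apply, mul_comm]

theorem EuclideanSpace.inner_le_inner_of_nonneg {c v w : EuclideanSpace ℝ ι}
    (hc : ∀ k, 0 ≤ c k) (hvw : ∀ k, v k ≤ w k) : ⟪c, v⟫ ≤ ⟪c, w⟫ := by
  simp only [EuclideanSpace.inner_eq_sum_mul]
  exact sum_le_sum fun k _ => mul_le_mul_of_nonneg_left (hvw k) (hc k)

theorem ConvexOn.inner_of_nonneg {E : Type*} [AddCommGroup E] [Module ℝ E] {s : Set E}
    (hs : Convex ℝ s) {g : E → EuclideanSpace ℝ ι} (hg : ∀ k, ConvexOn ℝ s fun z => g z k)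
    {c : EuclideanSpace ℝ ι} (hc : ∀ k, 0 ≤ c k) : ConvexOn ℝ s fun z => ⟪c, g z⟫ := by
  simp only [EuclideanSpace.inner_eq_sum_mul]
  have := sum_induction (s := univ) (fun k z => c k * g z k) (ConvexOn ℝ s)
    (fun _ _ => ConvexOn.add) (convexOn_const 0 hs) fun k _ => (hg k).smul (hc k)
  rwa [Finset.sum_fn] at this

end EuclideanOrder

section VirtualQueue

variable {ι : Type*}

structure IsVirtualQueue (a : ℤ → EuclideanSpace ℝ ι) (Q : ℕ → EuclideanSpace ℝ ι) : Prop where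
  zero : ∀ k, Q 0 k = max 0 (-a (-1) k)
  succ : ∀ (t : ℕ) k, Q (t + 1) k = max (-a t k) (Q t k + a t k)

namespace IsVirtualQueue

variable {a : ℤ → EuclideanSpace ℝ ι} {Q : ℕ → EuclideanSpace ℝ ι}

theorem nonneg (hQ : IsVirtualQueue a Q) (t : ℕ) (k : ι) : 0 ≤ Q t k := by
  induction t with
  | zero => rw [hQ.zero]; exact le_max_left _ _
  | succ t ih =>
    rw [hQ.succ]
    rcases le_total 0 (a t k) with h | h
    · exact le_max_of_le_right (by linarith)
    · exact le_max_of_le_left (by linarith)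

theorem add_prev_nonneg (hQ : IsVirtualQueue a Q) (t : ℕ) (k : ι) :
    0 ≤ Q t k + a (t - 1) k := by
  cases t with
  | zero =>
    rw [Nat.cast_zero, zero_sub, hQ.zero]
    linarith [le_max_right 0 (-a (-1) k)]
  | succ t =>
    rw [Nat.cast_succ, add_sub_cancel_right, hQ.succ]
    linarith [le_max_left (-a t k) (Q t k + a t k)]

theorem sum_le (hQ : IsVirtualQueue a Q) (T : ℕ) (k : ι) :
    ∑ τ ∈ range T, a τ k ≤ Q T k := by
  induction T with
  | zero => simpa using hQ.nonneg 0 k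
  | succ T ih =>
    rw [sum_range_succ, hQ.succ]
    linarith [le_max_right (-a T k) (Q T k + a T k)]

theorem sum_inner_le [Fintype ι] (hQ : IsVirtualQueue a Q) {lam : EuclideanSpace ℝ ι} (hlam : ∀ k, 0 ≤ lam k)
    (T : ℕ) : ∑ τ ∈ range T, ⟪lam, a τ⟫ ≤ ‖lam‖ * ‖Q T‖ := by
  rw [← inner_sum]
  refine le_trans (EuclideanSpace.inner_le_inner_of_nonneg hlam fun k => ?_) (real_inner_le_norm _ _)
  simpa using hQ.sum_le T k

theorem norm_sq_succ_le [Fintype ι] (hQ : IsVirtualQueue a Q) (t : ℕ) :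
    ‖Q (t + 1)‖ ^ 2 ≤ ‖Q t + a t‖ ^ 2 + ‖a t‖ ^ 2 := by
  simp only [EuclideanSpace.norm_sq_eq, Real.norm_eq_abs, sq_abs, ← sum_add_distrib]
  refine sum_le_sum fun k _ => ?_
  rw [hQ.succ, PiLp.add_apply]
  rcases max_cases (-a t k) (Q t k + a t k) with ⟨h, -⟩ | ⟨h, -⟩ <;> rw [h] <;> nlinarith

theorem norm_zero_le [Fintype ι] (hQ : IsVirtualQueue a Q) : ‖Q 0‖ ≤ ‖a (-1)‖ := by
  simp only [EuclideanSpace.norm_eq]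
  refine Real.sqrt_le_sqrt (sum_le_sum fun k _ => ?_)
  rw [hQ.zero]
  rcases max_cases 0 (-a (-1) k) with ⟨h, -⟩ | ⟨h, -⟩ <;> rw [h] <;> simp [sq_nonneg]

end IsVirtualQueue

end VirtualQueue

section Lyapunov

variable {E : Type*} [NormedAddCommGroup E] [InnerProductSpace ℝ E] {ι : Type*} [Fintype ι]

noncomputable def lyapunov (g : E → EuclideanSpace ℝ ι) (α : ℝ) (xs : E) (q : EuclideanSpace ℝ ι) (p : E) : ℝ :=
  ‖q‖ ^ 2 / 2 - ‖g p‖ ^ 2 / 2 + α * ‖xs - p‖ ^ 2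

theorem lyapunov_add_le_of_isMinOn {X : Set E} (hX : Convex ℝ X) {f : E → ℝ} (hf : ConvexOn ℝ X f)
    {g : E → EuclideanSpace ℝ ι} (hg : ∀ k, ConvexOn ℝ X fun z => g z k) {α β : ℝ}
    (hα : β ^ 2 / 2 ≤ α) {q q' : EuclideanSpace ℝ ι} {p y xs : E} (hq : ∀ k, 0 ≤ q k + g p k)
    (hy : y ∈ X) (hmin : IsMinOn (fun z => f z + ⟪q + g p, g z⟫ + α * ‖z - p‖ ^ 2) X y)
    (hLip : ‖g y - g p‖ ≤ β * ‖y - p‖) (hq' : ‖q'‖ ^ 2 ≤ ‖q + g y‖ ^ 2 + ‖g y‖ ^ 2)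
    (hxs : xs ∈ X) (hfeas : ∀ k, g xs k ≤ 0) :
    lyapunov g α xs q' y + f y ≤ lyapunov g α xs q p + f xs := by
  have hc : ∀ k, 0 ≤ (q + g p) k := hq
  have hconv : StrongConvexOn X (2 * α) fun z => f z + ⟪q + g p, g z⟫ + α * ‖z - p‖ ^ 2 :=
    ((strongConvexOn_zero.2 (hf.add (ConvexOn.inner_of_nonneg hX hg hc))).add
      (strongConvexOn_mul_norm_sub_sq hX α p)).mono fun r => by simp
  have hprox := hconv.add_norm_sub_sq_le_of_isMinOn hmin hy hxs
  have hfeas' : ⟪q + g p, g xs⟫ ≤ 0 := by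
    simpa using EuclideanSpace.inner_le_inner_of_nonneg (w := 0) hc hfeas
  have hexpand : ‖q + g y‖ ^ 2 =
      ‖q‖ ^ 2 + 2 * ⟪q + g p, g y⟫ + ‖g y - g p‖ ^ 2 - ‖g p‖ ^ 2 := by
    rw [norm_add_sq_real, norm_sub_sq_real, inner_add_left, real_inner_comm (g p) (g y)]
    ring
  have hLip2 : ‖g y - g p‖ ^ 2 ≤ 2 * α * ‖y - p‖ ^ 2 :=
    calc ‖g y - g p‖ ^ 2 ≤ β ^ 2 * ‖y - p‖ ^ 2 := by
          rw [← mul_pow]; exact pow_le_pow_left₀ (norm_nonneg _) hLip 2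
      _ ≤ 2 * α * ‖y - p‖ ^ 2 := by gcongr; linarith
  unfold lyapunov
  linarith

end Lyapunov

theorem sq_sub_two_mul_sq_le_of_le_add_mul {b G s β α : ℝ} (hb : 0 ≤ b) (hbG : b ≤ G + β * s)
    (hα : β ^ 2 / 2 < α) : b ^ 2 - 2 * α * s ^ 2 ≤ α / (α - β ^ 2 / 2) * G ^ 2 := by
  have hc : 0 < α - β ^ 2 / 2 := sub_pos.2 hα
  have hb2 : b ^ 2 ≤ (G + β * s) ^ 2 := pow_le_pow_left₀ hb hbG 2
  rw [div_mul_eq_mul_div, le_div_iff₀ hc]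
  -- The gap is `(β G - 2 (α - β²/2) s)² / 2`.
  nlinarith [mul_le_mul_of_nonneg_left hb2 hc.le, sq_nonneg (β * G - 2 * (α - β ^ 2 / 2) * s)]

theorem le_two_mul_add_add_of_sq_le {q l a c : ℝ} (hl : 0 ≤ l) (ha : 0 ≤ a) (hc : 0 ≤ c)
    (h : q ^ 2 ≤ 2 * l * q + a ^ 2 + c ^ 2) : q ≤ 2 * l + a + c := by
  nlinarith

theorem alg1_virtual_queue_bound_general
    {n m : ℕ}
    (X : Set (EuclideanSpace ℝ (Fin n))) (hXconv : Convex ℝ X)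
    (f : EuclideanSpace ℝ (Fin n) → ℝ) (hf : ConvexOn ℝ X f)
    (g : EuclideanSpace ℝ (Fin n) → EuclideanSpace ℝ (Fin m))
    (hg : ∀ k : Fin m, ConvexOn ℝ X (fun z => g z k))
    (β : ℝ) (hLip : ∀ u ∈ X, ∀ v ∈ X, ‖g u - g v‖ ≤ β * ‖u - v‖)
    (α : ℝ) (hα : β ^ 2 / 2 < α)
    (x : ℤ → EuclideanSpace ℝ (Fin n)) (hxm1 : x (-1) ∈ X)
    (Q : ℕ → EuclideanSpace ℝ (Fin m))
    (hQ0 : ∀ k : Fin m, Q 0 k = max 0 (-(g (x (-1)) k)))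
    (hxmem : ∀ t : ℕ, x t ∈ X)
    (hmin : ∀ t : ℕ, ∀ z ∈ X,
      f (x t) + ⟪Q t + g (x ((t : ℤ) - 1)), g (x t)⟫ + α * ‖x t - x ((t : ℤ) - 1)‖ ^ 2 ≤
        f z + ⟪Q t + g (x ((t : ℤ) - 1)), g z⟫ + α * ‖z - x ((t : ℤ) - 1)‖ ^ 2)
    (hQrec : ∀ (t : ℕ) (k : Fin m),
      Q (t + 1) k = max (-(g (x t) k)) (Q t k + g (x t) k))
    (xs : EuclideanSpace ℝ (Fin n)) (hxs : xs ∈ X)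
    (hfeas : ∀ k : Fin m, g xs k ≤ 0)
    (lam : EuclideanSpace ℝ (Fin m)) (hlam : ∀ k : Fin m, 0 ≤ lam k)
    (hsd : ∀ z ∈ X, f xs ≤ f z + ∑ k : Fin m, lam k * g z k)
    :
    ∀ t : ℕ, 1 ≤ t → ‖Q t‖ ≤ 2 * ‖lam‖ + Real.sqrt (2 * α) * ‖xs - x (-1)‖ + Real.sqrt (α / (α - β ^ 2 / 2)) * ‖g xs‖ := by
  intro t _
  have hprev : ∀ τ : ℕ, x (τ - 1) ∈ X := by
    rintro (_ | τ)
    · simpa using hxm1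
    · simpa using hxmem τ
  have hQ : IsVirtualQueue (fun τ => g (x τ)) Q := ⟨hQ0, hQrec⟩
  set L : ℕ → ℝ := fun τ => lyapunov g α xs (Q τ) (x (τ - 1)) with hL
  have hstep : ∀ τ : ℕ, L (τ + 1) - L τ ≤ ⟪lam, g (x τ)⟫ := by
    intro τ
    have hdec := lyapunov_add_le_of_isMinOn hXconv hf hg hα.le (hQ.add_prev_nonneg τ) (hxmem τ)
      (isMinOn_iff.2 (hmin τ)) (hLip _ (hxmem τ) _ (hprev τ)) (hQ.norm_sq_succ_le τ) hxs hfeas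
    have hdual := hsd (x τ) (hxmem τ)
    simp only [hL, Nat.cast_succ, add_sub_cancel_right, EuclideanSpace.inner_eq_sum_mul]
    linarith
  have hdrift : L t - L 0 ≤ ‖lam‖ * ‖Q t‖ := by
    rw [← sum_range_sub]
    exact (sum_le_sum fun τ _ => hstep τ).trans (hQ.sum_inner_le hlam t)
  have hL0 : L 0 ≤ α * ‖xs - x (-1)‖ ^ 2 := by
    have := pow_le_pow_left₀ (norm_nonneg _) hQ.norm_zero_le 2
    simp only [hL, lyapunov, Nat.cast_zero, zero_sub]
    linarith
  have hLt : ‖Q t‖ ^ 2 / 2 - α / (α - β ^ 2 / 2) * ‖g xs‖ ^ 2 / 2 ≤ L t := by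
    have hgx : ‖g (x (t - 1))‖ ≤ ‖g xs‖ + β * ‖xs - x (t - 1)‖ := by
      rw [norm_sub_rev xs]
      linarith [norm_le_norm_add_norm_sub' (g (x (t - 1))) (g xs), hLip _ (hprev t) xs hxs]
    have := sq_sub_two_mul_sq_le_of_le_add_mul (norm_nonneg _) hgx hα
    simp only [hL, lyapunov]
    linarith
  have hα₀ : 0 ≤ α := (by positivity : 0 ≤ β ^ 2 / 2).trans hα.le
  apply le_two_mul_add_add_of_sq_le (norm_nonneg lam) (by positivity) (by positivity)
  rw [mul_pow, mul_pow, Real.sq_sqrt (by positivity), Real.sq_sqrt (div_nonneg hα₀ (by linarith))]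
  linarith

theorem alg1_virtual_queue_bound
    {n m : ℕ}
    (X : Set (EuclideanSpace ℝ (Fin n))) (hXconv : Convex ℝ X) (hXcl : IsClosed X)
    (f : EuclideanSpace ℝ (Fin n) → ℝ) (hf : ConvexOn ℝ X f) (hfc : ContinuousOn f X)
    (g : EuclideanSpace ℝ (Fin n) → EuclideanSpace ℝ (Fin m))
    (hg : ∀ k : Fin m, ConvexOn ℝ X (fun z => g z k))
    (β : ℝ) (hLip : ∀ u ∈ X, ∀ v ∈ X, ‖g u - g v‖ ≤ β * ‖u - v‖)
    (α : ℝ) (hα : β ^ 2 / 2 < α)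
    (x : ℤ → EuclideanSpace ℝ (Fin n)) (hxm1 : x (-1) ∈ X)
    (Q : ℕ → EuclideanSpace ℝ (Fin m))
    (hQ0 : ∀ k : Fin m, Q 0 k = max 0 (-(g (x (-1)) k)))
    (hxmem : ∀ t : ℕ, x t ∈ X)
    (hmin : ∀ t : ℕ, ∀ z ∈ X,
      f (x t) + ⟪Q t + g (x ((t : ℤ) - 1)), g (x t)⟫ + α * ‖x t - x ((t : ℤ) - 1)‖ ^ 2 ≤
        f z + ⟪Q t + g (x ((t : ℤ) - 1)), g z⟫ + α * ‖z - x ((t : ℤ) - 1)‖ ^ 2)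
    (hQrec : ∀ (t : ℕ) (k : Fin m),
      Q (t + 1) k = max (-(g (x t) k)) (Q t k + g (x t) k))
    (xs : EuclideanSpace ℝ (Fin n)) (hxs : xs ∈ X)
    (hfeas : ∀ k : Fin m, g xs k ≤ 0)
    (hopt : ∀ z ∈ X, (∀ k : Fin m, g z k ≤ 0) → f xs ≤ f z)
    (lam : EuclideanSpace ℝ (Fin m)) (hlam : ∀ k : Fin m, 0 ≤ lam k)
    (hsd : ∀ z ∈ X, f xs ≤ f z + ∑ k : Fin m, lam k * g z k)
    :
    ∀ t : ℕ, 1 ≤ t → ‖Q t‖ ≤ 2 * ‖lam‖ + Real.sqrt (2 * α) * ‖xs - x (-1)‖ + Real.sqrt (α / (α - β ^ 2 / 2)) * ‖g xs‖ :=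
  alg1_virtual_queue_bound_general X hXconv f hf g hg β hLip α hα x hxm1 Q hQ0 hxmem hmin hQrec xs
    hxs hfeas lam hlam hsd
end
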